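/- Let n₁ = k₁ + 1 with n₁ ≥ 2. There exists a loopless multigraph on n₁ vertices with n₂ edges all of whose k₁-vertex induced subgraphs have at most k₂ edges if and only if n₂ − ⌊2n₂/n₁⌋ ≤ k₂. -/

import Mathlib

open Finset

/-- A loopless multigraph on `n` vertices, given by a symmetric edge-multiplicity
function with zero diagonal. -/
structure Multigraph (n : ℕ) where
  W : Fin n → Fin n → ℕ
  symm : ∀ u v, W u v = W v u
  loopless : ∀ v, W v v = 0

namespace Multigraph

variable {n : ℕ}

/-- Number of edges (with multiplicity) with both endpoints in `S`. -/
def edgesIn (G : Multigraph n) (S : Finset (Fin n)) : ℕ :=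
  ∑ u ∈ S, ∑ v ∈ S.filter (fun v => u < v), G.W u v

/-- Total number of edges (with multiplicity). -/
def edgeCount (G : Multigraph n) : ℕ := G.edgesIn Finset.univ

/-- Degree of a vertex: the number of edge-endpoints at `v`, with multiplicity. -/
def degree (G : Multigraph n) (v : Fin n) : ℕ := ∑ u, G.W v u

/-- A multigraph is almost regular if any two degrees differ by at most one. -/
def AlmostRegular (G : Multigraph n) : Prop :=
  ∀ u v, G.degree u ≤ G.degree v + 1

/-- The underlying simple graph (adjacency = at least one edge). -/
def toSimple (G : Multigraph n) : SimpleGraph (Fin n) where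
  Adj u v := u ≠ v ∧ 0 < G.W u v
  symm := by
    constructor
    intro u v h
    refine ⟨h.1.symm, ?_⟩
    rw [G.symm v u]
    exact h.2
  loopless := by
    constructor
    intro v h
    exact h.1 rfl

end Multigraph

/-- Number of edges of a simple graph with both endpoints in `S`. -/
noncomputable def SimpleGraph.edgesIn {V : Type*} (G : SimpleGraph V) (S : Finset V) : ℕ :=
  {e ∈ G.edgeSet | ∀ x ∈ e, x ∈ S}.ncard

/-! Deleting a vertex `v` from a multigraph with `m` edges leaves `m - deg v` edges, so all
`(n - 1)`-vertex induced subgraphs have at most `k` edges iff the minimum degree is at least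
`m - k`. The minimum degree is at most the average `⌊2m/n⌋`, and this bound is attained by a
cycle whose `i`-th edge has multiplicity `⌊(i+1)m/n⌋ - ⌊im/n⌋`: the two edges at a vertex
carry `⌊(i+1)m/n⌋ - ⌊(i-1)m/n⌋ ≥ ⌊2m/n⌋` edges. -/

namespace Multigraph

variable {n : ℕ} (G : Multigraph n)

theorem sum_sum_W_eq_two_mul_edgesIn (S : Finset (Fin n)) :
    ∑ u ∈ S, ∑ v ∈ S, G.W u v = 2 * G.edgesIn S := by
  have split : ∑ u ∈ S, ∑ v ∈ S, G.W u v
      = (∑ u ∈ S, ∑ v ∈ S, if u < v then G.W u v else 0)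
      + ∑ u ∈ S, ∑ v ∈ S, if v < u then G.W u v else 0 := by
    rw [← sum_add_distrib]
    refine sum_congr rfl fun u _ => ?_
    rw [← sum_add_distrib]
    refine sum_congr rfl fun v _ => ?_
    rcases lt_trichotomy u v with huv | rfl | hvu
    · simp [huv, not_lt_of_gt huv]
    · simp [G.loopless]
    · simp [hvu, not_lt_of_gt hvu]
  have swap : (∑ u ∈ S, ∑ v ∈ S, if v < u then G.W u v else 0)
      = ∑ u ∈ S, ∑ v ∈ S, if u < v then G.W u v else 0 := by
    rw [sum_comm]
    exact sum_congr rfl fun u _ => sum_congr rfl fun v _ => by rw [G.symm]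
  simp only [split, swap, edgesIn, sum_filter, two_mul]

theorem sum_degree_eq_two_mul_edgeCount : ∑ v, G.degree v = 2 * G.edgeCount :=
  G.sum_sum_W_eq_two_mul_edgesIn univ

theorem edgesIn_erase_add_degree (v : Fin n) :
    G.edgesIn (univ.erase v) + G.degree v = G.edgeCount := by
  have hv : v ∈ (univ : Finset (Fin n)) := mem_univ v
  have sum_W_left : ∑ u ∈ univ.erase v, G.W u v = G.degree v := by
    simp only [G.symm _ v]
    exact sum_erase _ (G.loopless v)
  have peel : ∑ u, ∑ w, G.W u w
      = G.degree v + (G.degree v + ∑ u ∈ univ.erase v, ∑ w ∈ univ.erase v, G.W u w) := by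
    rw [← add_sum_erase _ _ hv]
    congr 1
    simp only [← add_sum_erase _ _ hv, sum_add_distrib, sum_W_left]
  have h₁ := G.sum_sum_W_eq_two_mul_edgesIn (univ.erase v)
  have h₂ := G.sum_sum_W_eq_two_mul_edgesIn univ
  rw [peel] at h₂
  rw [edgeCount]
  omega

theorem forall_edgesIn_le_iff_sub_degree_le {k₁ : ℕ} (hn : n = k₁ + 1) (k₂ : ℕ) :
    (∀ S : Finset (Fin n), #S = k₁ → G.edgesIn S ≤ k₂) ↔
      ∀ v, G.edgeCount - G.degree v ≤ k₂ := by
  have erase_add_degree := G.edgesIn_erase_add_degree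
  constructor
  · intro hS v
    have := hS (univ.erase v) (by simp [hn])
    have := erase_add_degree v
    omega
  · intro hdeg S hS
    obtain ⟨v, hv⟩ : ∃ v, Sᶜ = {v} := card_eq_one.mp (by simp [card_compl, hS, hn])
    have hS : S = univ.erase v := by rw [← compl_compl S, hv, compl_singleton]
    have := hdeg v
    have := erase_add_degree v
    subst hS
    omega

theorem exists_degree_le_two_mul_edgeCount_div [NeZero n] :
    ∃ v, G.degree v ≤ 2 * G.edgeCount / n := by
  obtain ⟨v, -, hv⟩ := exists_le_of_sum_le (f := fun v => n * G.degree v)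
    (g := fun _ => 2 * G.edgeCount) univ_nonempty
    (by simp [← mul_sum, sum_degree_eq_two_mul_edgeCount])
  exact ⟨v, (Nat.le_div_iff_mul_le (NeZero.pos n)).mpr (by linarith)⟩

def cycle (w : Fin (n + 2) → ℕ) : Multigraph (n + 2) where
  W u v := (if u + 1 = v then w u else 0) + (if v + 1 = u then w v else 0)
  symm _ _ := add_comm _ _
  loopless v := by simp

theorem degree_cycle (w : Fin (n + 2) → ℕ) (v : Fin (n + 2)) :
    (cycle w).degree v = w v + w (v - 1) := by
  simp only [degree, cycle, sum_add_distrib, sum_ite_eq, mem_univ, if_true]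
  simp only [← eq_sub_iff_add_eq, sum_ite_eq', mem_univ, if_true]

theorem edgeCount_cycle (w : Fin (n + 2) → ℕ) : (cycle w).edgeCount = ∑ v, w v := by
  have h := (cycle w).sum_degree_eq_two_mul_edgeCount
  have shift : ∑ v, w (v - 1) = ∑ v, w v := Fintype.sum_equiv (Equiv.subRight 1) _ _ (by simp)
  simp only [degree_cycle, sum_add_distrib, shift] at h
  omega

end Multigraph

def balancedWeight (d m i : ℕ) : ℕ := (i + 1) * m / d - i * m / d

section balancedWeight

variable {d : ℕ} (m : ℕ)

theorem sum_range_balancedWeight (hd : 0 < d) : ∑ i ∈ range d, balancedWeight d m i = m := by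
  simp only [balancedWeight]
  rw [sum_range_tsub (f := fun i => i * m / d)
    fun a b hab => Nat.div_le_div_right (Nat.mul_le_mul_right _ hab)]
  simp [Nat.mul_div_cancel_left _ hd]

theorem balancedWeight_add_self (hd : 0 < d) (i : ℕ) :
    balancedWeight d m (i + d) = balancedWeight d m i := by
  have shift (j : ℕ) : (j + d) * m / d = j * m / d + m := by
    rw [add_mul, Nat.add_mul_div_left _ _ hd]
  simp only [balancedWeight, add_right_comm i d 1, shift]
  omega

theorem two_mul_div_le_balancedWeight_succ_add (i : ℕ) :
    2 * m / d ≤ balancedWeight d m (i + 1) + balancedWeight d m i := by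
  have := Nat.div_add_div_le_add_div (x := i * m) (y := 2 * m) (z := d)
  have : i * m / d ≤ (i + 1) * m / d := Nat.div_le_div_right (by nlinarith)
  have : (i + 1) * m / d ≤ (i + 2) * m / d := Nat.div_le_div_right (by nlinarith)
  simp only [balancedWeight, show i + 1 + 1 = i + 2 from rfl,
    show i * m + 2 * m = (i + 2) * m by ring] at *
  omega

end balancedWeight

namespace Multigraph

def balancedCycle (n m : ℕ) : Multigraph (n + 2) :=
  cycle fun v => balancedWeight (n + 2) m v

variable {n : ℕ}

theorem edgeCount_balancedCycle (m : ℕ) : (balancedCycle n m).edgeCount = m := by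
  rw [balancedCycle, edgeCount_cycle, Fin.sum_univ_eq_sum_range (balancedWeight (n + 2) m),
    sum_range_balancedWeight m (by omega)]

theorem two_mul_div_le_degree_balancedCycle (m : ℕ) (v : Fin (n + 2)) :
    2 * m / (n + 2) ≤ (balancedCycle n m).degree v := by
  rw [balancedCycle, degree_cycle, Fin.coe_sub_one]
  cases v using Fin.cases with
  | zero =>
    have wrap := balancedWeight_add_self m (d := n + 2) (by omega) 0
    rw [zero_add] at wrap
    simpa [wrap] using two_mul_div_le_balancedWeight_succ_add (d := n + 2) m (n + 1)
  | succ i =>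
    simpa [add_comm] using two_mul_div_le_balancedWeight_succ_add (d := n + 2) m i

end Multigraph

theorem exists_F_free_multigraph_iff_n1_eq_k1_succ (n₁ n₂ k₁ k₂ : ℕ)
    (h : n₁ = k₁ + 1) (hn : 2 ≤ n₁) :
    (∃ G : Multigraph n₁, G.edgeCount = n₂ ∧
        ∀ S : Finset (Fin n₁), S.card = k₁ → G.edgesIn S ≤ k₂) ↔
      n₂ - 2 * n₂ / n₁ ≤ k₂ := by
  obtain ⟨n, rfl⟩ : ∃ n, n₁ = n + 2 := ⟨n₁ - 2, by omega⟩
  simp only [fun G : Multigraph (n + 2) => G.forall_edgesIn_le_iff_sub_degree_le h k₂]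
  constructor
  · rintro ⟨G, rfl, hG⟩
    obtain ⟨v, hv⟩ := G.exists_degree_le_two_mul_edgeCount_div
    have := hG v
    omega
  · intro hk
    refine ⟨Multigraph.balancedCycle n n₂, Multigraph.edgeCount_balancedCycle n₂, fun v => ?_⟩
    have := Multigraph.two_mul_div_le_degree_balancedCycle n₂ v
    rw [Multigraph.edgeCount_balancedCycle]
    omega
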